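/- arXiv:2003.04923 — 2 statements merged into one kernel-verified Lean document; each statement's English description precedes it below -/
import Mathlib

section
/- Let R, ω₀ ∈ ℝ, L ∈ ℝ with L ≠ 0, c ∈ ℝ, and set θ₀(t) = ω₀·t + c. Let i, u : ℝ → ℝ³ with i differentiable, satisfying for all t the RL-line equation L·i'(t) = −R·i(t) + u(t) (componentwise). Define I(t) = T(θ₀(t))·i(t) and U(t) = T(θ₀(t))·u(t). Then I is differentiable and for all t: L·I'(t) = −R·I(t) + ω₀·L·J̃·I(t) + U(t), where J̃ = [[0,1,0],[−1,0,0],[0,0,0]]. (This is the synchronous DQ-frame representation of the power-line dynamics.) -/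
/-!
Differentiating the Park matrix row by row gives `d/dθ T(θ) = J̃ T(θ)`: the derivative of the
sine row is the cosine row, that of the cosine row is minus the sine row, and the
zero-sequence row is constant. With `θ₀' = ω₀` the product rule gives
`I' = ω₀ J̃ I + T(θ₀) i'`, and applying `T(θ₀)` to the line equation `L i' = -R i + u` yields the
DQ-frame equation.
-/

open Real Matrix

noncomputable def Park (θ : ℝ) : Matrix (Fin 3) (Fin 3) ℝ :=
  Real.sqrt (2/3) •
    !![Real.sin θ, Real.sin (θ - 2*π/3), Real.sin (θ + 2*π/3);
       Real.cos θ, Real.cos (θ - 2*π/3), Real.cos (θ + 2*π/3);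
       1/Real.sqrt 2, 1/Real.sqrt 2, 1/Real.sqrt 2]

def J3 : Matrix (Fin 3) (Fin 3) ℝ :=
  !![0, 1, 0; -1, 0, 0; 0, 0, 0]

theorem hasDerivAt_mulVec_apply {𝕜 m n : Type*} [NontriviallyNormedField 𝕜] [Fintype n]
    {A : 𝕜 → Matrix m n 𝕜} {A' : Matrix m n 𝕜} {v : 𝕜 → n → 𝕜} {v' : n → 𝕜} {t : 𝕜}
    (hA : ∀ j k, HasDerivAt (fun s => A s j k) (A' j k) t)
    (hv : ∀ k, HasDerivAt (fun s => v s k) (v' k) t) (j : m) :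
    HasDerivAt (fun s => (A s *ᵥ v s) j) ((A' *ᵥ v t + A t *ᵥ v') j) t := by
  simp only [mulVec, dotProduct, Pi.add_apply, ← Finset.sum_add_distrib]
  exact HasDerivAt.fun_sum fun k _ => (hA j k).mul (hv k)

theorem hasDerivAt_park_apply (θ : ℝ) (j k : Fin 3) :
    HasDerivAt (fun θ => Park θ j k) ((J3 * Park θ) j k) θ := by
  fin_cases j <;> fin_cases k <;>
    simp only [Park, J3, mul_apply, Fin.sum_univ_three, Matrix.smul_apply, smul_eq_mul, of_apply,
      cons_val', cons_val_zero, cons_val_one, cons_val_two, head_cons, tail_cons, empty_val',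
      cons_val_fin_one, Fin.zero_eta, Fin.mk_one, Fin.reduceFinMk, zero_mul, one_mul, neg_mul,
      head_fin_const, zero_add, add_zero]
  · exact (hasDerivAt_sin θ).const_mul _
  · exact ((hasDerivAt_sin _).comp_sub_const θ _).const_mul _
  · exact ((hasDerivAt_sin _).comp_add_const θ _).const_mul _
  · exact ((hasDerivAt_cos θ).const_mul _).congr_deriv (mul_neg _ _)
  · exact (((hasDerivAt_cos _).comp_sub_const θ _).const_mul _).congr_deriv (mul_neg _ _)
  · exact (((hasDerivAt_cos _).comp_add_const θ _).const_mul _).congr_deriv (mul_neg _ _)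
  all_goals exact hasDerivAt_const _ _

theorem line_dynamics_DQ_frame_general (R ω₀ L c : ℝ)
    (i i' u : ℝ → Fin 3 → ℝ)
    (hdiff : ∀ t j, HasDerivAt (fun s => i s j) (i' t j) t)
    (hline : ∀ t j, L * i' t j = -R * i t j + u t j) :
    ∀ t : ℝ, ∃ I' : Fin 3 → ℝ,
      (∀ j, HasDerivAt (fun s => (Park (ω₀ * s + c)).mulVec (i s) j) (I' j) t) ∧
      ∀ j, L * I' j =
        -R * (Park (ω₀ * t + c)).mulVec (i t) j
          + ω₀ * L * (J3.mulVec ((Park (ω₀ * t + c)).mulVec (i t))) j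
          + (Park (ω₀ * t + c)).mulVec (u t) j := by
  intro t
  set P := Park (ω₀ * t + c)
  have hθ : HasDerivAt (fun s => ω₀ * s + c) ω₀ t := by
    simpa using ((hasDerivAt_id t).const_mul ω₀).add_const c
  have hP : ∀ j k, HasDerivAt (fun s => Park (ω₀ * s + c) j k) ((ω₀ • (J3 * P)) j k) t :=
    fun j k => ((hasDerivAt_park_apply _ j k).comp t hθ).congr_deriv (mul_comm _ _)
  refine ⟨(ω₀ • (J3 * P)) *ᵥ i t + P *ᵥ i' t, hasDerivAt_mulVec_apply hP (hdiff t), fun j => ?_⟩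
  have hline_t : L • i' t = -R • i t + u t := funext (hline t)
  have hframe : L • ((ω₀ • (J3 * P)) *ᵥ i t + P *ᵥ i' t)
      = -R • (P *ᵥ i t) + (ω₀ * L) • (J3 *ᵥ (P *ᵥ i t)) + P *ᵥ u t := by
    rw [smul_add, ← mulVec_smul P, hline_t, mulVec_add, mulVec_smul, smul_mulVec, ← mulVec_mulVec,
      smul_smul, mul_comm L]
    abel
  simpa using congrFun hframe j

/-- Synchronous DQ-frame representation of RL power-line dynamics:
if `L i' = -R i + u` componentwise, then the Park-transformed current
`I t = T(ω₀ t + c) i t` satisfies `L I' = -R I + ω₀ L J̃ I + U`. -/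
theorem line_dynamics_DQ_frame (R ω₀ L c : ℝ) (hL : L ≠ 0)
    (i i' u : ℝ → Fin 3 → ℝ)
    (hdiff : ∀ t j, HasDerivAt (fun s => i s j) (i' t j) t)
    (hline : ∀ t j, L * i' t j = -R * i t j + u t j) :
    ∀ t : ℝ, ∃ I' : Fin 3 → ℝ,
      (∀ j, HasDerivAt (fun s => (Park (ω₀ * s + c)).mulVec (i s) j) (I' j) t) ∧
      ∀ j, L * I' j =
        -R * (Park (ω₀ * t + c)).mulVec (i t) j
          + ω₀ * L * (J3.mulVec ((Park (ω₀ * t + c)).mulVec (i t))) j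
          + (Park (ω₀ * t + c)).mulVec (u t) j :=
  line_dynamics_DQ_frame_general R ω₀ L c i i' u hdiff hline
end

section
/- Let R, X, L ∈ ℝ with R² + X² ≠ 0, and let V_i, V_k, δ_i, δ_k, a_i, a_k, b_i, b_k ∈ ℝ (a_i, a_k playing the role of the voltage-magnitude derivatives V̇_i, V̇_k and b_i, b_k of the angle derivatives δ̇_i, δ̇_k). Set G = R/(R²+X²), B = X/(R²+X²), G' = (R²−X²)·L/(R²+X²)², B' = 2·R·X·L/(R²+X²)², I⁰ = (V_i·e^{iδ_i} − V_k·e^{iδ_k})/(R + i·X), and I¹ = I⁰ − (L/(R+i·X)²)·[(a_i + i·V_i·b_i)·e^{iδ_i} − (a_k + i·V_k·b_k)·e^{iδ_k}]. Then, writing δ = δ_i − δ_k, the complex power S¹ = conj(I¹)·V_i·e^{iδ_i} satisfies: Re S¹ = [G·V_i² − G·V_i·V_k·cos δ + B·V_i·V_k·sin δ] − G'·V_i·a_i + G'·V_i·a_k·cos δ + G'·V_i·V_k·b_k·sin δ − B'·V_i²·b_i − B'·V_i·a_k·sin δ + B'·V_i·V_k·b_k·cos δ, and Im S¹ = [B·V_i²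 − B·V_i·V_k·cos δ − G·V_i·V_k·sin δ] + G'·V_i²·b_i + G'·V_i·a_k·sin δ − G'·V_i·V_k·b_k·cos δ − B'·V_i·a_i + B'·V_i·a_k·cos δ + B'·V_i·V_k·b_k·sin δ. (These are the first-order active and reactive power flows P¹_{ik}, Q¹_{ik} used by the high-fidelity 3rd-order microgrid model.) -/
/-!
The admittance of the line is `(R + iX)⁻¹ = G - iB`, and its square gives
`L / (R + iX)² = L (G - iB)² = G' - iB'`. Multiplying `conj I¹` by `V_i e^{iδ_i}` turns each
`conj (e^{iδ_k}) e^{iδ_i}` into `e^{iδ}` and each `conj (e^{iδ_i}) e^{iδ_i}` into `1`, so `S¹` is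
a polynomial in `G, B, G', B', cos δ, sin δ` whose real and imaginary parts are read off.
-/

open Complex

open scoped ComplexConjugate

lemma conj_exp_I_mul_ofReal_mul_exp (θ φ : ℝ) :
    conj (exp (I * φ)) * exp (I * θ) = exp (I * ↑(θ - φ)) := by
  rw [← exp_conj, ← exp_add, map_mul, conj_I, conj_ofReal, ofReal_sub]
  ring_nf

lemma conj_sub_mul_exp_mul_exp (a b : ℂ) (θ φ : ℝ) :
    conj (a * exp (I * θ) - b * exp (I * φ)) * exp (I * θ)
      = conj a - conj b * exp (I * ↑(θ - φ)) := by
  simp only [map_sub, map_mul, sub_mul, mul_assoc, conj_exp_I_mul_ofReal_mul_exp, sub_self,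
    ofReal_zero, mul_zero, exp_zero, mul_one]

lemma conj_inv_ofReal_add_I_mul (R X : ℝ) :
    conj ((R + I * X)⁻¹) = ↑(R / (R ^ 2 + X ^ 2)) + I * ↑(X / (R ^ 2 + X ^ 2)) := by
  rw [inv_def, map_mul, conj_conj, conj_ofReal, mul_comm I, normSq_add_mul_I]
  push_cast
  ring

lemma conj_div_ofReal_add_I_mul_sq (R X L : ℝ) :
    conj ((L : ℂ) / (R + I * X) ^ 2)
      = ((R ^ 2 - X ^ 2) * L / (R ^ 2 + X ^ 2) ^ 2 : ℝ)
        + I * (2 * R * X * L / (R ^ 2 + X ^ 2) ^ 2 : ℝ) := by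
  rw [div_eq_mul_inv, ← inv_pow, map_mul, map_pow, conj_inv_ofReal_add_I_mul, conj_ofReal]
  push_cast
  -- `ring` would expand `(R² + X²)²` inside the inverse into an unrelated atom
  simp only [div_eq_mul_inv, ← inv_pow]
  linear_combination (L * (X / (R ^ 2 + X ^ 2)) ^ 2 : ℂ) * I_sq

theorem first_order_power_flow_general (R X L : ℝ)
    (Vi Vk δi δk ai ak bi bk : ℝ) :
    let G : ℝ := R / (R^2 + X^2)
    let B : ℝ := X / (R^2 + X^2)
    let G' : ℝ := (R^2 - X^2) * L / (R^2 + X^2)^2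
    let B' : ℝ := 2 * R * X * L / (R^2 + X^2)^2
    let I0 : ℂ := ((Vi : ℂ) * Complex.exp (Complex.I * δi)
        - (Vk : ℂ) * Complex.exp (Complex.I * δk)) / ((R : ℂ) + Complex.I * X)
    let I1 : ℂ := I0 - ((L : ℂ) / ((R : ℂ) + Complex.I * X)^2) *
        (((ai : ℂ) + Complex.I * Vi * bi) * Complex.exp (Complex.I * δi)
          - ((ak : ℂ) + Complex.I * Vk * bk) * Complex.exp (Complex.I * δk))
    let δ : ℝ := δi - δk
    let S1 : ℂ := (starRingEnd ℂ) I1 * ((Vi : ℂ) * Complex.exp (Complex.I * δi))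
    S1.re = (G * Vi^2 - G * Vi * Vk * Real.cos δ + B * Vi * Vk * Real.sin δ)
        - G' * Vi * ai + G' * Vi * ak * Real.cos δ
        + G' * Vi * Vk * bk * Real.sin δ - B' * Vi^2 * bi
        - B' * Vi * ak * Real.sin δ + B' * Vi * Vk * bk * Real.cos δ ∧
    S1.im = (B * Vi^2 - B * Vi * Vk * Real.cos δ - G * Vi * Vk * Real.sin δ)
        + G' * Vi^2 * bi + G' * Vi * ak * Real.sin δ
        - G' * Vi * Vk * bk * Real.cos δ - B' * Vi * ai
        + B' * Vi * ak * Real.cos δ + B' * Vi * Vk * bk * Real.sin δ := by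
  intro G B G' B' I0 I1 δ S1
  set U : ℂ := Vi * exp (I * δi) - Vk * exp (I * δk)
  set W : ℂ := (ai + I * Vi * bi) * exp (I * δi) - (ak + I * Vk * bk) * exp (I * δk)
  have hU : conj U * exp (I * δi) = Vi - Vk * exp (I * δ) := by
    rw [conj_sub_mul_exp_mul_exp, conj_ofReal, conj_ofReal]
  have hW : conj W * exp (I * δi)
      = conj (ai + I * Vi * bi) - conj (ak + I * Vk * bk) * exp (I * δ) :=
    conj_sub_mul_exp_mul_exp _ _ δi δk
  have hS1 : S1 = Vi * ((G + I * B) * (Vi - Vk * exp (I * δ))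
      - (G' + I * B') * (conj (ai + I * Vi * bi) - conj (ak + I * Vk * bk) * exp (I * δ))) := by
    have hI1 : I1 = (R + I * X)⁻¹ * U - (L / (R + I * X) ^ 2) * W := by
      simp only [I1, I0]
      ring
    simp only [S1, hI1, map_sub, map_mul, conj_inv_ofReal_add_I_mul, conj_div_ofReal_add_I_mul_sq]
    linear_combination (Vi * (G + I * B) : ℂ) * hU - (Vi * (G' + I * B') : ℂ) * hW
  rw [hS1, mul_comm I (δ : ℂ), exp_ofReal_mul_I]
  simp only [map_add, map_mul, conj_ofReal, conj_I, mul_re, mul_im, add_re, add_im, sub_re, sub_im,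
    neg_re, neg_im, I_re, I_im, ofReal_re, ofReal_im]
  constructor <;> ring

theorem first_order_power_flow (R X L : ℝ) (hRX : R^2 + X^2 ≠ 0)
    (Vi Vk δi δk ai ak bi bk : ℝ) :
    let G : ℝ := R / (R^2 + X^2)
    let B : ℝ := X / (R^2 + X^2)
    let G' : ℝ := (R^2 - X^2) * L / (R^2 + X^2)^2
    let B' : ℝ := 2 * R * X * L / (R^2 + X^2)^2
    let I0 : ℂ := ((Vi : ℂ) * Complex.exp (Complex.I * δi)
        - (Vk : ℂ) * Complex.exp (Complex.I * δk)) / ((R : ℂ) + Complex.I * X)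
    let I1 : ℂ := I0 - ((L : ℂ) / ((R : ℂ) + Complex.I * X)^2) *
        (((ai : ℂ) + Complex.I * Vi * bi) * Complex.exp (Complex.I * δi)
          - ((ak : ℂ) + Complex.I * Vk * bk) * Complex.exp (Complex.I * δk))
    let δ : ℝ := δi - δk
    let S1 : ℂ := (starRingEnd ℂ) I1 * ((Vi : ℂ) * Complex.exp (Complex.I * δi))
    S1.re = (G * Vi^2 - G * Vi * Vk * Real.cos δ + B * Vi * Vk * Real.sin δ)
        - G' * Vi * ai + G' * Vi * ak * Real.cos δ
        + G' * Vi * Vk * bk * Real.sin δ - B' * Vi^2 * bi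
        - B' * Vi * ak * Real.sin δ + B' * Vi * Vk * bk * Real.cos δ ∧
    S1.im = (B * Vi^2 - B * Vi * Vk * Real.cos δ - G * Vi * Vk * Real.sin δ)
        + G' * Vi^2 * bi + G' * Vi * ak * Real.sin δ
        - G' * Vi * Vk * bk * Real.cos δ - B' * Vi * ai
        + B' * Vi * ak * Real.cos δ + B' * Vi * Vk * bk * Real.sin δ :=
  first_order_power_flow_general R X L Vi Vk δi δk ai ak bi bk
end
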